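/- Let G be a finite graph, Γ ⊆ Ω(G), and Γ' a collection of independent sets of G with ⋃Γ' ⊆ ⋃Γ and ⋂Γ ⊆ ⋂Γ'. Then |⋃Γ'| + |⋂Γ'| ≤ |⋃Γ| + |⋂Γ|. -/

import Mathlib

open Finset

/-- Union of a finite collection of finite sets. -/
def collU {α : Type*} [DecidableEq α] (Γ : Finset (Finset α)) : Finset α :=
  Γ.sup id

/-- Intersection of a finite collection of finite sets
(equals the usual intersection when the collection is non-empty). -/
def collI {α : Type*} [DecidableEq α] (Γ : Finset (Finset α)) : Finset α :=
  (Γ.sup id).filter (fun x => ∀ S ∈ Γ, x ∈ S)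

/-- `e Γ = |⋃Γ| + |⋂Γ|` as an integer. -/
def collE {α : Type*} [DecidableEq α] (Γ : Finset (Finset α)) : ℤ :=
  (collU Γ).card + (collI Γ).card

/-- `F` is a hereditary König–Egerváry collection with common cardinality `a`. -/
def IsHKE {α : Type*} [DecidableEq α] (F : Finset (Finset α)) (a : ℕ) : Prop :=
  (∀ S ∈ F, S.card = a) ∧
  ∀ Γ ⊆ F, Γ.Nonempty → collE Γ = 2 * (a : ℤ)

/-- A finite set of vertices is independent in `G`. -/
def IsIndep {V : Type*} (G : SimpleGraph V) (S : Finset V) : Prop :=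
  ∀ x ∈ S, ∀ y ∈ S, ¬ G.Adj x y

/-- A maximum independent set of `G`. -/
def IsMaxIndep {V : Type*} (G : SimpleGraph V) (S : Finset V) : Prop :=
  IsIndep G S ∧ ∀ T : Finset V, IsIndep G T → T.card ≤ S.card

/-- A finite set of edges of `G` which is a matching (pairwise non-incident edges). -/
def IsMatchingSet {V : Type*} (G : SimpleGraph V) (M : Finset (Sym2 V)) : Prop :=
  (∀ e ∈ M, e ∈ G.edgeSet) ∧
  ∀ e ∈ M, ∀ f ∈ M, e ≠ f → ∀ v : V, v ∈ e → v ∉ f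

/-!
Let `X = ⋂Γ' \ ⋂Γ`. It is independent, and its neighbours inside `⋃Γ` avoid `⋃Γ'`, since every
member of `Γ'` contains `X`. The key claim is that an independent set `Y` disjoint from `⋂Γ` has at
least `|Y|` neighbours in `⋃Γ` when `Γ ⊆ Ω(G)`; then `|⋂Γ'| - |⋂Γ| = |X| ≤ |⋃Γ| - |⋃Γ'|`.
For a single maximum independent set `W` the claim holds because `(W \ N(Y)) ∪ Y` is independent,
hence no larger than `W`. Adding `W` to `Γ`, split `Y` into `Y \ W`, handled by `W`, and `Y ∩ W`,
handled by induction; their neighbourhoods are disjoint because `W` is independent.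
-/

section Collections

variable {α : Type*} [DecidableEq α]

@[simp]
lemma mem_collU {Γ : Finset (Finset α)} {x : α} : x ∈ collU Γ ↔ ∃ S ∈ Γ, x ∈ S := by
  simp [collU, mem_sup]

lemma mem_collI {Γ : Finset (Finset α)} {x : α} :
    x ∈ collI Γ ↔ (∃ S ∈ Γ, x ∈ S) ∧ ∀ S ∈ Γ, x ∈ S := by
  simp [collI, mem_sup]

lemma collI_subset_collU (Γ : Finset (Finset α)) : collI Γ ⊆ collU Γ :=
  filter_subset _ _

@[simp]
lemma collU_singleton (W : Finset α) : collU {W} = W := by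
  simp [collU]

@[simp]
lemma collI_singleton (W : Finset α) : collI {W} = W := by
  ext x; simp [mem_collI]

lemma collU_cons {W : Finset α} {Γ : Finset (Finset α)} (h : W ∉ Γ) :
    collU (cons W Γ h) = W ∪ collU Γ := by
  simp [collU]

lemma collI_cons {W : Finset α} {Γ : Finset (Finset α)} (h : W ∉ Γ) (hΓ : Γ.Nonempty) :
    collI (cons W Γ h) = W ∩ collI Γ := by
  obtain ⟨S₀, hS₀⟩ := hΓ
  ext x
  simp only [mem_collI, mem_cons, exists_eq_or_imp, forall_eq_or_imp, mem_inter]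
  exact ⟨fun ⟨_, hW, h⟩ => ⟨hW, ⟨S₀, hS₀, h S₀ hS₀⟩, h⟩, fun ⟨hW, _, h⟩ => ⟨Or.inl hW, hW, h⟩⟩

end Collections

section Neighbourhoods

variable {V : Type*} {G : SimpleGraph V}

lemma IsIndep.mono {S T : Finset V} (hT : IsIndep G T) (h : S ⊆ T) : IsIndep G S :=
  fun x hx y hy => hT x (h hx) y (h hy)

lemma isIndep_collI [DecidableEq V] {Γ : Finset (Finset V)} (hΓ : ∀ S ∈ Γ, IsIndep G S) :
    IsIndep G (collI Γ) := by
  intro x hx y hy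
  obtain ⟨⟨S, hS, hxS⟩, -⟩ := mem_collI.1 hx
  exact hΓ S hS x hxS y ((mem_collI.1 hy).2 S hS)

def nbhdIn (G : SimpleGraph V) [DecidableRel G.Adj] (Y T : Finset V) : Finset V :=
  {w ∈ T | ∃ y ∈ Y, G.Adj y w}

variable [DecidableRel G.Adj]

lemma nbhdIn_mono {Y Y' T T' : Finset V} (hY : Y ⊆ Y') (hT : T ⊆ T') :
    nbhdIn G Y T ⊆ nbhdIn G Y' T' := by
  intro w hw
  obtain ⟨hwT, y, hy, hyw⟩ := mem_filter.1 hw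
  exact mem_filter.2 ⟨hT hwT, y, hY hy, hyw⟩

lemma disjoint_nbhdIn_of_subset {Y W : Finset V} (hW : IsIndep G W) (hY : Y ⊆ W) (T : Finset V) :
    Disjoint (nbhdIn G Y T) W := by
  refine disjoint_left.2 fun w hw hwW => ?_
  obtain ⟨-, y, hy, hyw⟩ := mem_filter.1 hw
  exact hW y (hY hy) w hwW hyw

variable [DecidableEq V]

lemma disjoint_nbhdIn_collU {Γ : Finset (Finset V)} (hΓ : ∀ S ∈ Γ, IsIndep G S) {Y : Finset V}
    (hY : Y ⊆ collI Γ) (T : Finset V) : Disjoint (nbhdIn G Y T) (collU Γ) := by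
  refine disjoint_right.2 fun w hw hwN => ?_
  obtain ⟨S, hS, hwS⟩ := mem_collU.1 hw
  exact disjoint_left.1
    (disjoint_nbhdIn_of_subset (hΓ S hS) (fun y hy => (mem_collI.1 (hY hy)).2 S hS) T) hwN hwS

lemma isIndep_sdiff_nbhdIn_union {W Y : Finset V} (hW : IsIndep G W) (hY : IsIndep G Y) :
    IsIndep G ((W \ nbhdIn G Y W) ∪ Y) := by
  have hnot : ∀ w ∈ W \ nbhdIn G Y W, ∀ y ∈ Y, ¬ G.Adj y w := fun w hw y hy hyw =>
    (mem_sdiff.1 hw).2 (mem_filter.2 ⟨(mem_sdiff.1 hw).1, y, hy, hyw⟩)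
  intro x hx y hy hxy
  rcases mem_union.1 hx with hx | hx <;> rcases mem_union.1 hy with hy | hy
  · exact hW x (mem_sdiff.1 hx).1 y (mem_sdiff.1 hy).1 hxy
  · exact hnot x hx y hy hxy.symm
  · exact hnot y hy x hx hxy
  · exact hY x hx y hy hxy

lemma IsMaxIndep.card_le_card_nbhdIn {W Y : Finset V} (hW : IsMaxIndep G W) (hY : IsIndep G Y)
    (hYW : Disjoint Y W) : #Y ≤ #(nbhdIn G Y W) := by
  have hN : nbhdIn G Y W ⊆ W := filter_subset _ _
  have hcard := hW.2 _ (isIndep_sdiff_nbhdIn_union hW.1 hY)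
  rw [card_union_of_disjoint (hYW.symm.mono_left sdiff_subset), card_sdiff_of_subset hN] at hcard
  have := card_le_card hN
  omega

lemma card_le_card_nbhdIn_collU {Γ : Finset (Finset V)} (hne : Γ.Nonempty)
    (hΓ : ∀ S ∈ Γ, IsMaxIndep G S) {Y : Finset V} (hY : IsIndep G Y)
    (hYI : Disjoint Y (collI Γ)) : #Y ≤ #(nbhdIn G Y (collU Γ)) := by
  induction hne using Nonempty.cons_induction generalizing Y with
  | singleton W =>
    simp only [collU_singleton, collI_singleton] at hYI ⊢
    exact (hΓ W (mem_singleton_self W)).card_le_card_nbhdIn hY hYI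
  | cons W Γ₀ hWΓ₀ hne₀ ih =>
    have hW : IsMaxIndep G W := hΓ W (mem_cons_self W Γ₀)
    rw [collI_cons hWΓ₀ hne₀] at hYI
    rw [collU_cons hWΓ₀]
    have hout : #(Y \ W) ≤ #(nbhdIn G (Y \ W) W) :=
      hW.card_le_card_nbhdIn (hY.mono sdiff_subset) sdiff_disjoint
    have hin : #(Y ∩ W) ≤ #(nbhdIn G (Y ∩ W) (collU Γ₀)) :=
      ih (fun S hS => hΓ S (mem_cons_of_mem hS)) (hY.mono inter_subset_left) (disjoint_assoc.2 hYI)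
    have hdisj : Disjoint (nbhdIn G (Y \ W) W) (nbhdIn G (Y ∩ W) (collU Γ₀)) :=
      (disjoint_nbhdIn_of_subset hW.1 inter_subset_right _).symm.mono_left (filter_subset _ _)
    calc #Y = #(Y \ W) + #(Y ∩ W) := (card_sdiff_add_card_inter Y W).symm
      _ ≤ #(nbhdIn G (Y \ W) W) + #(nbhdIn G (Y ∩ W) (collU Γ₀)) := add_le_add hout hin
      _ = #(nbhdIn G (Y \ W) W ∪ nbhdIn G (Y ∩ W) (collU Γ₀)) :=
        (card_union_of_disjoint hdisj).symm
      _ ≤ #(nbhdIn G Y (W ∪ collU Γ₀)) := card_le_card <| union_subset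
        (nbhdIn_mono sdiff_subset subset_union_left)
        (nbhdIn_mono inter_subset_left subset_union_right)

end Neighbourhoods

theorem stmt_11_general {V : Type*} [DecidableEq V] (G : SimpleGraph V)
    (Γ Γ' : Finset (Finset V))
    (hΩ : ∀ S ∈ Γ, IsMaxIndep G S)
    (hind : ∀ S ∈ Γ', IsIndep G S)
    (hU : collU Γ' ⊆ collU Γ) (hI : collI Γ ⊆ collI Γ') :
    (collU Γ').card + (collI Γ').card ≤ (collU Γ).card + (collI Γ).card := by
  let _ : DecidableRel G.Adj := Classical.decRel _
  rcases Γ.eq_empty_or_nonempty with rfl | hΓ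
  · have hU' : collU Γ' = ∅ := subset_empty.1 hU
    simp [hU', subset_empty.1 (hU' ▸ collI_subset_collU Γ')]
  set X := collI Γ' \ collI Γ
  have hXindep : IsIndep G X := (isIndep_collI hind).mono sdiff_subset
  have hN : nbhdIn G X (collU Γ) ⊆ collU Γ \ collU Γ' :=
    subset_sdiff.2 ⟨filter_subset _ _, disjoint_nbhdIn_collU hind sdiff_subset _⟩
  have hX : #X ≤ #(collU Γ \ collU Γ') :=
    (card_le_card_nbhdIn_collU hΓ hΩ hXindep sdiff_disjoint).trans (card_le_card hN)
  have hXI : #X + #(collI Γ) = #(collI Γ') := card_sdiff_add_card_eq_card hI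
  have hUU : #(collU Γ \ collU Γ') + #(collU Γ') = #(collU Γ) := card_sdiff_add_card_eq_card hU
  omega

theorem stmt_11 {V : Type*} [Fintype V] [DecidableEq V] (G : SimpleGraph V)
    (Γ Γ' : Finset (Finset V)) (hΓ : Γ.Nonempty) (hΓ' : Γ'.Nonempty)
    (hΩ : ∀ S ∈ Γ, IsMaxIndep G S)
    (hind : ∀ S ∈ Γ', IsIndep G S)
    (hU : collU Γ' ⊆ collU Γ) (hI : collI Γ ⊆ collI Γ') :
    (collU Γ').card + (collI Γ').card ≤ (collU Γ).card + (collI Γ).card :=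
  stmt_11_general G Γ Γ' hΩ hind hU hI
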